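/- arXiv:1005.2002 — 2 statements merged into one kernel-verified Lean document; each statement's English description precedes it below -/
import Mathlib

section
/- Let A be the graded-commutative ring Λ[x_{ij}]/(Arnold relations) with odd generators x_{ij} (1 ≤ i < j ≤ n), and let Δ be the derivation with Δ(x_{ij}) = 1. Set y_{ij} := x_{ij} - x_{12} for {i,j} ≠ {1,2}, and let Y ⊆ A be the subalgebra generated by the y_{ij}. Then A = Y ⊕ Y·x_{12} as graded abelian groups, i.e., A is a free module over the exterior algebra Λ[x_{12}] with basis the subalgebra Y. -/
open ExteriorAlgebra

/-- Unordered pairs of distinct indices in `Fin n`, indexing the generators `x_{ij}`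
(this builds in the relation `x_{ij} = x_{ji}`). -/
abbrev ConfPair (n : ℕ) := {p : Sym2 (Fin n) // ¬ p.IsDiag}

/-- The generator `x_{ij}` of the exterior algebra over `ℤ` on the free module with
basis the unordered pairs `{i,j}`, `i ≠ j` (it is `0` when `i = j`). -/
noncomputable def exGen (n : ℕ) (i j : Fin n) :
    ExteriorAlgebra ℤ (ConfPair n →₀ ℤ) :=
  if h : i = j then 0
  else ExteriorAlgebra.ι ℤ (Finsupp.single ⟨s(i, j), by simpa using h⟩ 1)

/-- The Arnold relations `x_{ij} x_{jk} + x_{jk} x_{ki} + x_{ki} x_{ij} = 0` for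
pairwise distinct `i, j, k`. -/
inductive ArnoldRel (n : ℕ) :
    ExteriorAlgebra ℤ (ConfPair n →₀ ℤ) → ExteriorAlgebra ℤ (ConfPair n →₀ ℤ) → Prop
  | arnold (i j k : Fin n) (hij : i ≠ j) (hjk : j ≠ k) (hki : k ≠ i) :
      ArnoldRel n
        (exGen n i j * exGen n j k + exGen n j k * exGen n k i + exGen n k i * exGen n i j) 0

/-- The Arnold algebra `A = Λ[x_{ij} : 1 ≤ i ≠ j ≤ n] / (x_{ij} = x_{ji}, Arnold relations)`,
the cohomology ring of `Conf_n(ℂ^d)` (with generators in degree `2d-1`). -/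
abbrev ArnoldAlgebra (n : ℕ) := RingQuot (ArnoldRel n)

/-- The class `x_{ij}` in the Arnold algebra. -/
noncomputable def xcl (n : ℕ) (i j : Fin n) : ArnoldAlgebra n :=
  RingQuot.mkAlgHom ℤ (ArnoldRel n) (exGen n i j)

/-- The `ℤ`-submodule of the Arnold algebra spanned by the generators `x_{ij}`; its `m`-th
power is the degree `m(2d-1)` homogeneous part. -/
noncomputable def xSpan (n : ℕ) : Submodule ℤ (ArnoldAlgebra n) :=
  Submodule.span ℤ {a | ∃ i j, i ≠ j ∧ a = xcl n i j}


/-- The subalgebra `Y` of the Arnold algebra generated by the elements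
`y_{ij} = x_{ij} - x_{12}` for `{i,j} ≠ {1,2}` (indices `1, 2` are realized as
`0, 1 : Fin n`). -/
noncomputable def Ysub (n : ℕ) (hn : 1 < n) : Subring (ArnoldAlgebra n) :=
  Subring.closure {a | ∃ i j : Fin n, i ≠ j ∧
    s(i, j) ≠ s((⟨0, by omega⟩ : Fin n), ⟨1, hn⟩) ∧
    a = xcl n i j - xcl n ⟨0, by omega⟩ ⟨1, hn⟩}

/-! The assignment `x_{ij} ↦ [[-x_{ij}, 1], [0, x_{ij}]]` respects the Arnold relations and so
defines a ring homomorphism `A → M₂(A)`, `a ↦ [[σ a, Δ a], [0, a]]`, where `σ` is the grading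
involution and `Δ` is the derivation of the statement, twisted by `σ`:
`Δ (a b) = σ a · Δ b + Δ a · b`. Since `Δ y_{ij} = 0`, `Δ` kills `Y`; applying `Δ` to
`y + y' x₁₂ = 0` gives `σ y' = 0`, so `y' = 0` and then `y = 0`. Conversely `x₁₂ a = σ a · x₁₂`,
`σ Y ⊆ Y` and `x₁₂² = 0`, so `Y + Y x₁₂` is a subring; it contains `x_{ij} = y_{ij} + x₁₂`. -/

section AddMulDecomposition

variable {R : Type*} [Ring R]

theorem Subring.exists_add_mul_of_mem_closure (Y : Subring R) {x : R} (hxx : x * x = 0)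
    (hxY : ∀ y ∈ Y, ∃ z ∈ Y, x * y = z * x) {s : Set R}
    (hs : ∀ a ∈ s, ∃ y ∈ Y, ∃ y' ∈ Y, a = y + y' * x) {a : R} (ha : a ∈ Subring.closure s) :
    ∃ y ∈ Y, ∃ y' ∈ Y, a = y + y' * x := by
  induction ha using Subring.closure_induction with
  | mem a ha => exact hs a ha
  | zero => exact ⟨0, zero_mem _, 0, zero_mem _, by simp⟩
  | one => exact ⟨1, one_mem _, 0, zero_mem _, by simp⟩
  | add a b _ _ ha hb =>
    obtain ⟨y₁, h₁, y₁', h₁', rfl⟩ := ha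
    obtain ⟨y₂, h₂, y₂', h₂', rfl⟩ := hb
    exact ⟨y₁ + y₂, add_mem h₁ h₂, y₁' + y₂', add_mem h₁' h₂', by noncomm_ring⟩
  | neg a _ ha =>
    obtain ⟨y, h, y', h', rfl⟩ := ha
    exact ⟨-y, neg_mem h, -y', neg_mem h', by noncomm_ring⟩
  | mul a b _ _ ha hb =>
    obtain ⟨y₁, h₁, y₁', h₁', rfl⟩ := ha
    obtain ⟨y₂, h₂, y₂', h₂', rfl⟩ := hb
    obtain ⟨z₂, hz₂, e₂⟩ := hxY y₂ h₂
    obtain ⟨z₂', -, e₂'⟩ := hxY y₂' h₂'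
    refine ⟨y₁ * y₂, mul_mem h₁ h₂, y₁ * y₂' + y₁' * z₂,
      add_mem (mul_mem h₁ h₂') (mul_mem h₁' hz₂), ?_⟩
    calc (y₁ + y₁' * x) * (y₂ + y₂' * x)
        = y₁ * y₂ + y₁ * y₂' * x + y₁' * (x * y₂) + y₁' * (x * y₂') * x := by noncomm_ring
      _ = y₁ * y₂ + (y₁ * y₂' + y₁' * z₂) * x + y₁' * z₂' * (x * x) := by
        rw [e₂, e₂']; noncomm_ring
      _ = y₁ * y₂ + (y₁ * y₂' + y₁' * z₂) * x := by rw [hxx, mul_zero, add_zero]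

theorem eq_zero_of_add_mul_eq_zero {σ : R →+* R} (hσ : Function.Injective σ) {Δ : R →+ R}
    (hΔ : ∀ a b, Δ (a * b) = σ a * Δ b + Δ a * b) {x y y' : R} (hx : Δ x = 1)
    (hy : Δ y = 0) (hy' : Δ y' = 0) (h : y + y' * x = 0) : y = 0 ∧ y' = 0 := by
  have hσy' : σ y' = 0 := by simpa [hΔ, hx, hy, hy'] using congrArg Δ h
  have hy'0 : y' = 0 := hσ (by rw [hσy', map_zero])
  exact ⟨by simpa [hy'0] using h, hy'0⟩

end AddMulDecomposition

namespace ArnoldAlgebra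

variable {n : ℕ}

lemma mkAlgHom_ι_single {i j : Fin n} (hij : i ≠ j) :
    RingQuot.mkAlgHom ℤ (ArnoldRel n)
      (ι ℤ (Finsupp.single ⟨s(i, j), Sym2.mk_isDiag_iff.not.2 hij⟩ 1)) = xcl n i j := by
  rw [xcl, exGen, dif_neg hij]

lemma xcl_eq_of_sym2_eq {i j k l : Fin n} (hij : i ≠ j) (hkl : k ≠ l)
    (h : s(i, j) = s(k, l)) : xcl n i j = xcl n k l := by
  rw [← mkAlgHom_ι_single hij, ← mkAlgHom_ι_single hkl]
  congr 3
  exact Subtype.ext h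

lemma xcl_mul_self (i j : Fin n) : xcl n i j * xcl n i j = 0 := by
  rw [xcl, ← map_mul, exGen]
  split <;> simp

lemma xcl_anticomm (i j k l : Fin n) :
    xcl n i j * xcl n k l = -(xcl n k l * xcl n i j) := by
  refine eq_neg_of_add_eq_zero_left ?_
  rw [xcl, xcl, ← map_mul, ← map_mul, ← map_add, exGen, exGen]
  split <;> split <;> simp [ι_add_mul_swap]

lemma xcl_arnold {i j k : Fin n} (hij : i ≠ j) (hjk : j ≠ k) (hki : k ≠ i) :
    xcl n i j * xcl n j k + xcl n j k * xcl n k i + xcl n k i * xcl n i j = 0 := by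
  simpa [xcl] using RingQuot.mkAlgHom_rel ℤ (ArnoldRel.arnold i j k hij hjk hki)

theorem closure_xcl_eq_top :
    Subring.closure {a : ArnoldAlgebra n | ∃ i j, i ≠ j ∧ a = xcl n i j} = ⊤ := by
  rw [eq_top_iff]
  rintro a -
  obtain ⟨b, rfl⟩ := RingQuot.mkAlgHom_surjective ℤ (ArnoldRel n) a
  induction b using ExteriorAlgebra.induction with
  | algebraMap r => simp
  | add a b ha hb => rw [map_add]; exact add_mem ha hb
  | mul a b ha hb => rw [map_mul]; exact mul_mem ha hb
  | ι m =>
    induction m using Finsupp.induction_linear with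
    | zero => simp
    | add f g hf hg => rw [map_add, map_add]; exact add_mem hf hg
    | single p c =>
      obtain ⟨p, hp⟩ := p
      induction p using Sym2.ind with
      | _ i j =>
        have hij : i ≠ j := by simpa using hp
        rw [← Finsupp.smul_single_one, map_zsmul, map_zsmul, mkAlgHom_ι_single hij]
        refine zsmul_mem (Subring.subset_closure ?_) c
        exact ⟨i, j, hij, rfl⟩

lemma mem_closure_xcl (a : ArnoldAlgebra n) :
    a ∈ Subring.closure {a : ArnoldAlgebra n | ∃ i j, i ≠ j ∧ a = xcl n i j} :=
  closure_xcl_eq_top ▸ Subring.mem_top a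

noncomputable def arnoldι (n : ℕ) : (ConfPair n →₀ ℤ) →ₗ[ℤ] ArnoldAlgebra n :=
  (RingQuot.mkAlgHom ℤ (ArnoldRel n)).toLinearMap ∘ₗ ι ℤ

lemma arnoldι_apply (m : ConfPair n →₀ ℤ) :
    arnoldι n m = RingQuot.mkAlgHom ℤ (ArnoldRel n) (ι ℤ m) := rfl

noncomputable def twistLinear (n : ℕ) :
    (ConfPair n →₀ ℤ) →ₗ[ℤ] Matrix (Fin 2) (Fin 2) (ArnoldAlgebra n) where
  toFun m := !![-arnoldι n m, algebraMap ℤ _ (Finsupp.linearCombination ℤ (fun _ => 1) m);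
    0, arnoldι n m]
  map_add' a b := by
    ext i j
    fin_cases i <;> fin_cases j <;> simp [add_comm]
  map_smul' c a := by
    ext i j
    fin_cases i <;> fin_cases j <;> simp

lemma twistLinear_apply (m : ConfPair n →₀ ℤ) :
    twistLinear n m = !![-arnoldι n m,
      algebraMap ℤ _ (Finsupp.linearCombination ℤ (fun _ => 1) m); 0, arnoldι n m] := rfl

lemma twistLinear_mul_self (m : ConfPair n →₀ ℤ) : twistLinear n m * twistLinear n m = 0 := by
  have hsq : arnoldι n m * arnoldι n m = 0 := by
    rw [arnoldι_apply, ← map_mul, ι_sq_zero, map_zero]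
  ext i j
  fin_cases i <;> fin_cases j <;> simp [twistLinear_apply, hsq, Int.cast_comm]

noncomputable def twistExterior (n : ℕ) :
    ExteriorAlgebra ℤ (ConfPair n →₀ ℤ) →ₐ[ℤ] Matrix (Fin 2) (Fin 2) (ArnoldAlgebra n) :=
  ExteriorAlgebra.lift ℤ ⟨twistLinear n, twistLinear_mul_self⟩

lemma twistExterior_exGen {i j : Fin n} (hij : i ≠ j) :
    twistExterior n (exGen n i j) = !![-xcl n i j, 1; 0, xcl n i j] := by
  rw [exGen, dif_neg hij]
  refine (ExteriorAlgebra.lift_ι_apply ℤ (twistLinear n) twistLinear_mul_self _).trans ?_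
  show twistLinear n _ = _
  simp [twistLinear_apply, arnoldι_apply, mkAlgHom_ι_single hij]

lemma twistExterior_arnoldRel ⦃a b : ExteriorAlgebra ℤ (ConfPair n →₀ ℤ)⦄
    (h : ArnoldRel n a b) : twistExterior n a = twistExterior n b := by
  obtain ⟨i, j, k, hij, hjk, hki⟩ := h
  simp only [map_add, map_mul, map_zero, twistExterior_exGen hij, twistExterior_exGen hjk,
    twistExterior_exGen hki]
  ext r c
  fin_cases r <;> fin_cases c <;> simp [← add_assoc, xcl_arnold hij hjk hki]

noncomputable def twist (n : ℕ) :
    ArnoldAlgebra n →ₐ[ℤ] Matrix (Fin 2) (Fin 2) (ArnoldAlgebra n) :=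
  RingQuot.liftAlgHom ℤ ⟨twistExterior n, twistExterior_arnoldRel⟩

lemma twist_xcl {i j : Fin n} (hij : i ≠ j) :
    twist n (xcl n i j) = !![-xcl n i j, 1; 0, xcl n i j] := by
  rw [xcl, twist, RingQuot.liftAlgHom_mkAlgHom_apply, twistExterior_exGen hij]
  rfl

lemma twist_apply_one (a : ArnoldAlgebra n) : twist n a 1 = ![0, a] := by
  induction mem_closure_xcl a using Subring.closure_induction with
  | mem a ha =>
    obtain ⟨i, j, hij, rfl⟩ := ha
    ext c; fin_cases c <;> simp [twist_xcl hij]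
  | zero => ext c; fin_cases c <;> simp
  | one => ext c; fin_cases c <;> simp
  | add a b _ _ ha hb => ext c; fin_cases c <;> simp [Matrix.add_apply, ha, hb]
  | neg a _ ha => ext c; fin_cases c <;> simp [ha]
  | mul a b _ _ ha hb =>
    ext c; fin_cases c <;> simp [Matrix.mul_apply, Fin.sum_univ_two, ha, hb]

noncomputable def parity (n : ℕ) : ArnoldAlgebra n →+* ArnoldAlgebra n where
  toFun a := twist n a 0 0
  map_one' := by simp
  map_mul' a b := by simp [Matrix.mul_apply, Fin.sum_univ_two, twist_apply_one]
  map_zero' := by simp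
  map_add' a b := by simp

noncomputable def delta (n : ℕ) : ArnoldAlgebra n →+ ArnoldAlgebra n :=
  (Matrix.entryAddMonoidHom (ArnoldAlgebra n) 0 1).comp (twist n).toAddMonoidHom

lemma twist_eq (a : ArnoldAlgebra n) : twist n a = !![parity n a, delta n a; 0, a] := by
  ext i j
  fin_cases i <;> fin_cases j <;> simp [parity, delta, twist_apply_one]

lemma parity_xcl {i j : Fin n} (hij : i ≠ j) : parity n (xcl n i j) = -xcl n i j := by
  simp [parity, twist_xcl hij]

lemma delta_xcl {i j : Fin n} (hij : i ≠ j) : delta n (xcl n i j) = 1 := by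
  simp [delta, twist_xcl hij]

lemma delta_mul (a b : ArnoldAlgebra n) :
    delta n (a * b) = parity n a * delta n b + delta n a * b := by
  simpa [twist_eq, Matrix.mul_fin_two] using congrFun₂ (map_mul (twist n) a b) 0 1

lemma parity_involutive : Function.Involutive (parity n) := by
  suffices (parity n).comp (parity n) = RingHom.id _ from RingHom.congr_fun this
  refine RingHom.eq_of_eqOn_set_dense closure_xcl_eq_top ?_
  rintro _ ⟨i, j, hij, rfl⟩
  simp [parity_xcl hij]

lemma xcl_mul (i j : Fin n) (a : ArnoldAlgebra n) :
    xcl n i j * a = parity n a * xcl n i j := by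
  induction mem_closure_xcl a using Subring.closure_induction with
  | mem a ha =>
    obtain ⟨k, l, hkl, rfl⟩ := ha
    rw [xcl_anticomm, parity_xcl hkl, neg_mul]
  | zero => simp
  | one => simp
  | add a b _ _ ha hb => rw [mul_add, ha, hb, map_add, add_mul]
  | neg a _ ha => rw [mul_neg, ha, map_neg, neg_mul]
  | mul a b _ _ ha hb => rw [← mul_assoc, ha, mul_assoc, hb, map_mul, mul_assoc]

section Ysub

variable (hn : 1 < n)

lemma parity_mem_Ysub {y : ArnoldAlgebra n} (hy : y ∈ Ysub n hn) : parity n y ∈ Ysub n hn := by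
  refine (Subring.closure_le (t := (Ysub n hn).comap (parity n))).2 ?_ hy
  rintro _ ⟨i, j, hij, hs, rfl⟩
  have h01 : (⟨0, by omega⟩ : Fin n) ≠ ⟨1, hn⟩ := by simp [Fin.ext_iff]
  rw [SetLike.mem_coe, Subring.mem_comap, map_sub, parity_xcl hij, parity_xcl h01, ← neg_sub']
  exact neg_mem (Subring.subset_closure ⟨i, j, hij, hs, rfl⟩)

lemma delta_eq_zero_of_mem_Ysub {y : ArnoldAlgebra n} (hy : y ∈ Ysub n hn) : delta n y = 0 := by
  induction hy using Subring.closure_induction with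
  | mem a ha =>
    obtain ⟨i, j, hij, -, rfl⟩ := ha
    rw [map_sub, delta_xcl hij, delta_xcl (by simp [Fin.ext_iff]), sub_self]
  | zero => simp
  | one => simp [delta]
  | add a b _ _ ha hb => rw [map_add, ha, hb, add_zero]
  | neg a _ ha => rw [map_neg, ha, neg_zero]
  | mul a b _ _ ha hb => rw [delta_mul, ha, hb, mul_zero, zero_mul, add_zero]

lemma xcl_mem_Ysub_add_mul {i j : Fin n} (hij : i ≠ j) :
    ∃ y ∈ Ysub n hn, ∃ y' ∈ Ysub n hn, xcl n i j = y + y' * xcl n ⟨0, by omega⟩ ⟨1, hn⟩ := by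
  by_cases hs : s(i, j) = s((⟨0, by omega⟩ : Fin n), ⟨1, hn⟩)
  · refine ⟨0, zero_mem _, 1, one_mem _, ?_⟩
    rw [xcl_eq_of_sym2_eq hij (by simp [Fin.ext_iff]) hs, zero_add, one_mul]
  · refine ⟨_, Subring.subset_closure ⟨i, j, hij, hs, rfl⟩, 1, one_mem _, ?_⟩
    rw [one_mul, sub_add_cancel]

end Ysub

end ArnoldAlgebra

open ArnoldAlgebra in
/-- With `A` the Arnold algebra, `y_{ij} := x_{ij} - x_{12}` and `Y ⊆ A`
the subalgebra generated by the `y_{ij}` (`{i,j} ≠ {1,2}`), we have `A = Y ⊕ Y·x_{12}`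
as (graded) abelian groups; i.e. `A` is a free module over `Λ[x_{12}]` with basis `Y`:
every element is uniquely `y + y'·x_{12}` with `y, y' ∈ Y`. -/
theorem arnold_free_over_x12 (n : ℕ) (hn : 1 < n) :
    (∀ a : ArnoldAlgebra n, ∃ y y' : ArnoldAlgebra n, y ∈ Ysub n hn ∧ y' ∈ Ysub n hn ∧
        a = y + y' * xcl n ⟨0, by omega⟩ ⟨1, hn⟩) ∧
    (∀ y y' : ArnoldAlgebra n, y ∈ Ysub n hn → y' ∈ Ysub n hn →
        y + y' * xcl n ⟨0, by omega⟩ ⟨1, hn⟩ = 0 → y = 0 ∧ y' = 0) := by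
  have h01 : (⟨0, by omega⟩ : Fin n) ≠ ⟨1, hn⟩ := by simp [Fin.ext_iff]
  refine ⟨fun a => ?_, fun y y' hy hy' h => ?_⟩
  · obtain ⟨y, hy, y', hy', rfl⟩ := (Ysub n hn).exists_add_mul_of_mem_closure
      (xcl_mul_self _ _) (fun y hy => ⟨parity n y, parity_mem_Ysub hn hy, xcl_mul _ _ y⟩)
      (by rintro _ ⟨i, j, hij, rfl⟩; exact xcl_mem_Ysub_add_mul hn hij) (mem_closure_xcl a)
    exact ⟨y, y', hy, hy', rfl⟩
  · exact eq_zero_of_add_mul_eq_zero parity_involutive.injective delta_mul (delta_xcl h01)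
      (delta_eq_zero_of_mem_Ysub hn hy) (delta_eq_zero_of_mem_Ysub hn hy') h
end

section
/- Let A be the Arnold algebra Λ[x_{ij} : 1 ≤ i ≠ j ≤ n]/(x_{ij} = x_{ji}, Arnold relations) with generators in odd degree. Then the quotient A/(x_{12}) is, as a graded abelian group, isomorphic to the subalgebra Y of A generated by {y_{ij} = x_{ij} - x_{12} : {i,j} ≠ {1,2}}, via the composition Y ↪ A ↠ A/(x_{12}). -/
open ExteriorAlgebra

/-- The (additive group underlying the) two-sided ideal of the Arnold algebra
generated by `x_{12}`. -/
noncomputable def x12Ideal (n : ℕ) (hn : 1 < n) : AddSubgroup (ArnoldAlgebra n) :=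
  AddSubgroup.closure
    {c | ∃ a b : ArnoldAlgebra n, c = a * xcl n ⟨0, by omega⟩ ⟨1, hn⟩ * b}

/-!
The algebra endomorphism `x_{ij} ↦ x_{ij} - x_{12}` of the exterior algebra preserves the Arnold
relations, because `x_{12}` anticommutes with every generator and squares to zero. It therefore
descends to an endomorphism `φ` of `A`. Now `φ` kills `x_{12}`, fixes every `y_{ij}`, maps each
`x_{ij}` into `Y` and satisfies `x_{ij} - φ x_{ij} = x_{12}`; so `φ` is a retraction of `A` onto
`Y` with kernel `(x_{12})`, i.e. `A = Y ⊕ (x_{12})`.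
-/

theorem QuotientAddGroup.bijective_mk'_of_retraction {A : Type*} [AddCommGroup A]
    (I : AddSubgroup A) (Y : Set A) (φ : A →+ A) (hφY : ∀ a, φ a ∈ Y)
    (hφ_fix : ∀ y ∈ Y, φ y = y) (hI : I ≤ φ.ker) (hsub : ∀ a, a - φ a ∈ I) :
    Function.Bijective (fun y : Y => QuotientAddGroup.mk' I (y : A)) := by
  constructor
  · rintro ⟨y₁, hy₁⟩ ⟨y₂, hy₂⟩ h
    have hI' : -y₁ + y₂ ∈ I := QuotientAddGroup.eq.mp h
    have : -y₁ + y₂ = 0 := by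
      simpa [hφ_fix _ hy₁, hφ_fix _ hy₂] using hI hI'
    exact Subtype.ext (neg_add_eq_zero.mp this)
  · intro b
    obtain ⟨a, rfl⟩ := QuotientAddGroup.mk'_surjective I b
    exact ⟨⟨φ a, hφY a⟩, QuotientAddGroup.eq.mpr (by simpa [sub_eq_neg_add] using hsub a)⟩

theorem TwoSidedIdeal.mem_span_singleton_iff {R : Type*} [Ring R] {x z : R} :
    z ∈ TwoSidedIdeal.span {x} ↔ z ∈ AddSubgroup.closure {c | ∃ a b, c = a * x * b} := by
  rw [TwoSidedIdeal.mem_span_iff_mem_addSubgroup_closure]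
  congr!
  ext c
  simp [Set.mem_mul, eq_comm]

theorem cyclic_sum_mul_sub_eq {R : Type*} [Ring R] {a b c t : R}
    (ha : a * t + t * a = 0) (hb : b * t + t * b = 0) (hc : c * t + t * c = 0)
    (ht : t * t = 0) :
    (a - t) * (b - t) + (b - t) * (c - t) + (c - t) * (a - t) = a * b + b * c + c * a := by
  have expand : (a - t) * (b - t) + (b - t) * (c - t) + (c - t) * (a - t)
      = a * b + b * c + c * a - (a * t + t * a) - (b * t + t * b) - (c * t + t * c)
        + 3 * (t * t) := by noncomm_ring
  rw [expand, ha, hb, hc, ht]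
  simp

theorem Fin.mk_zero_ne_mk_one {n : ℕ} (hn : 1 < n) :
    (⟨0, by omega⟩ : Fin n) ≠ ⟨1, hn⟩ := by
  simp [Fin.ext_iff]

namespace ArnoldAlgebra

variable {n : ℕ}

theorem exGen_mul_add_mul_swap (i j k l : Fin n) :
    exGen n i j * exGen n k l + exGen n k l * exGen n i j = 0 := by
  unfold exGen
  split_ifs <;> simp [ι_add_mul_swap]

theorem exGen_mul_self (i j : Fin n) : exGen n i j * exGen n i j = 0 := by
  unfold exGen
  split_ifs <;> simp

theorem exGen_comm (i j : Fin n) : exGen n i j = exGen n j i := by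
  by_cases h : i = j
  · rw [h]
  · simp only [exGen, dif_neg h, dif_neg (Ne.symm h), Sym2.eq_swap]

theorem exGen_eq_ι {i j : Fin n} (h : i ≠ j) :
    exGen n i j = ι ℤ (Finsupp.single ⟨s(i, j), by simpa using h⟩ 1) :=
  dif_neg h

theorem xcl_congr {i j k l : Fin n} (h : s(i, j) = s(k, l)) : xcl n i j = xcl n k l := by
  rcases Sym2.eq_iff.mp h with ⟨rfl, rfl⟩ | ⟨rfl, rfl⟩
  · rfl
  · rw [xcl, exGen_comm, xcl]

theorem mem_of_xcl_mem (S : Subring (ArnoldAlgebra n)) (hS : ∀ i j, i ≠ j → xcl n i j ∈ S)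
    (a : ArnoldAlgebra n) : a ∈ S := by
  have hι (m : ConfPair n →₀ ℤ) : RingQuot.mkAlgHom ℤ (ArnoldRel n) (ι ℤ m) ∈ S := by
    induction m using Finsupp.induction_linear with
    | zero => rw [map_zero, map_zero]; exact zero_mem S
    | add f g hf hg => rw [map_add, map_add]; exact add_mem hf hg
    | single p c =>
      obtain ⟨p, hp⟩ := p
      induction p using Sym2.ind with | h i j => ?_
      have hij : i ≠ j := by simpa using hp
      rw [← mul_one c, ← smul_eq_mul, ← Finsupp.smul_single, map_smul, map_smul,
        ← exGen_eq_ι hij]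
      exact zsmul_mem (hS i j hij) c
  obtain ⟨e, rfl⟩ := RingQuot.mkAlgHom_surjective ℤ (ArnoldRel n) a
  induction e using ExteriorAlgebra.induction with
  | algebraMap r => rw [AlgHom.commutes, eq_intCast]; exact intCast_mem S r
  | ι m => exact hι m
  | mul x y hx hy => rw [map_mul]; exact mul_mem hx hy
  | add x y hx hy => rw [map_add]; exact add_mem hx hy

variable (hn : 1 < n)

def x12Pair : ConfPair n :=
  ⟨s(⟨0, by omega⟩, ⟨1, hn⟩), by simp⟩

noncomputable def exteriorShiftX12 :
    ExteriorAlgebra ℤ (ConfPair n →₀ ℤ) →ₐ[ℤ] ExteriorAlgebra ℤ (ConfPair n →₀ ℤ) :=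
  ExteriorAlgebra.map <| Finsupp.linearCombination ℤ fun p =>
    Finsupp.single p 1 - Finsupp.single (x12Pair hn) 1

theorem exteriorShiftX12_exGen {i j : Fin n} (h : i ≠ j) :
    exteriorShiftX12 hn (exGen n i j) = exGen n i j - exGen n ⟨0, by omega⟩ ⟨1, hn⟩ := by
  rw [exGen_eq_ι h, exGen_eq_ι (Fin.mk_zero_ne_mk_one hn), exteriorShiftX12, map_apply_ι,
    Finsupp.linearCombination_single, one_smul, map_sub]
  rfl

theorem exteriorShiftX12_arnold {i j k : Fin n} (hij : i ≠ j) (hjk : j ≠ k) (hki : k ≠ i) :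
    exteriorShiftX12 hn
        (exGen n i j * exGen n j k + exGen n j k * exGen n k i + exGen n k i * exGen n i j) =
      exGen n i j * exGen n j k + exGen n j k * exGen n k i + exGen n k i * exGen n i j := by
  simp only [map_add, map_mul, exteriorShiftX12_exGen hn hij, exteriorShiftX12_exGen hn hjk,
    exteriorShiftX12_exGen hn hki]
  exact cyclic_sum_mul_sub_eq (exGen_mul_add_mul_swap ..) (exGen_mul_add_mul_swap ..)
    (exGen_mul_add_mul_swap ..) (exGen_mul_self ..)

noncomputable def shiftX12 : ArnoldAlgebra n →ₐ[ℤ] ArnoldAlgebra n :=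
  RingQuot.liftAlgHom ℤ ⟨(RingQuot.mkAlgHom ℤ (ArnoldRel n)).comp (exteriorShiftX12 hn), by
    rintro _ _ ⟨i, j, k, hij, hjk, hki⟩
    rw [AlgHom.comp_apply, AlgHom.comp_apply, exteriorShiftX12_arnold hn hij hjk hki, map_zero]
    exact RingQuot.mkAlgHom_rel ℤ (ArnoldRel.arnold i j k hij hjk hki)⟩

theorem shiftX12_xcl {i j : Fin n} (h : i ≠ j) :
    shiftX12 hn (xcl n i j) = xcl n i j - xcl n ⟨0, by omega⟩ ⟨1, hn⟩ := by
  rw [xcl, shiftX12, RingQuot.liftAlgHom_mkAlgHom_apply, AlgHom.comp_apply,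
    exteriorShiftX12_exGen hn h, map_sub]
  rfl

theorem shiftX12_mem_Ysub (a : ArnoldAlgebra n) : shiftX12 hn a ∈ Ysub n hn := by
  refine mem_of_xcl_mem ((Ysub n hn).comap (shiftX12 hn : ArnoldAlgebra n →+* ArnoldAlgebra n))
    (fun i j hij => ?_) a
  change shiftX12 hn (xcl n i j) ∈ Ysub n hn
  rw [shiftX12_xcl hn hij]
  by_cases h : s(i, j) = s(⟨0, by omega⟩, ⟨1, hn⟩)
  · rw [xcl_congr h, sub_self]
    exact zero_mem _
  · exact Subring.subset_closure ⟨i, j, hij, h, rfl⟩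

theorem shiftX12_eq_self_of_mem_Ysub {y : ArnoldAlgebra n} (hy : y ∈ Ysub n hn) :
    shiftX12 hn y = y := by
  refine RingHom.eqOn_set_closure (f := (shiftX12 hn : ArnoldAlgebra n →+* ArnoldAlgebra n))
    (g := RingHom.id _) ?_ hy
  rintro _ ⟨i, j, hij, -, rfl⟩
  change shiftX12 hn (xcl n i j - xcl n _ _) = _
  rw [map_sub, shiftX12_xcl hn hij, shiftX12_xcl hn (Fin.mk_zero_ne_mk_one hn), sub_self,
    sub_zero]
  rfl

theorem x12Ideal_le_ker :
    x12Ideal n hn ≤ (shiftX12 hn : ArnoldAlgebra n →+ ArnoldAlgebra n).ker := by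
  refine (AddSubgroup.closure_le _).mpr ?_
  rintro _ ⟨a, b, rfl⟩
  simp [shiftX12_xcl hn (Fin.mk_zero_ne_mk_one hn)]

theorem sub_shiftX12_mem_x12Ideal (a : ArnoldAlgebra n) :
    a - shiftX12 hn a ∈ x12Ideal n hn := by
  -- The claim says that `shiftX12` and the identity agree modulo the two-sided ideal `J`;
  -- both being ring maps, it suffices to compare them on the generators.
  set J := TwoSidedIdeal.span {xcl n ⟨0, by omega⟩ ⟨1, hn⟩}
  let π := J.ringCon.mk'
  have hx12 : π (xcl n ⟨0, by omega⟩ ⟨1, hn⟩) = 0 :=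
    (RingCon.eq J.ringCon).mpr (TwoSidedIdeal.subset_span rfl)
  have hπ : a ∈ π.eqLocus (π.comp (shiftX12 hn : ArnoldAlgebra n →+* ArnoldAlgebra n)) := by
    refine mem_of_xcl_mem _ (fun i j hij => ?_) a
    change π _ = π (shiftX12 hn _)
    rw [shiftX12_xcl hn hij, map_sub, hx12, sub_zero]
  exact TwoSidedIdeal.mem_span_singleton_iff.mp <| (J.rel_iff _ _).mp <| (RingCon.eq _).mp hπ

end ArnoldAlgebra

/-- For the Arnold algebra `A`, the quotient `A/(x_{12})` by the
two-sided ideal generated by `x_{12}` is, as a (graded) abelian group, isomorphic to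
the subalgebra `Y` generated by the `y_{ij} = x_{ij} - x_{12}`, via the composite
`Y ↪ A ↠ A/(x_{12})` — i.e. this composite is bijective. -/
theorem arnold_quotient_by_x12_iso_Y (n : ℕ) (hn : 1 < n) :
    Function.Bijective
      (fun y : Ysub n hn => QuotientAddGroup.mk' (x12Ideal n hn) (y : ArnoldAlgebra n)) :=
  QuotientAddGroup.bijective_mk'_of_retraction _ _ _ (ArnoldAlgebra.shiftX12_mem_Ysub hn)
    (fun _ => ArnoldAlgebra.shiftX12_eq_self_of_mem_Ysub hn) (ArnoldAlgebra.x12Ideal_le_ker hn)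
    (ArnoldAlgebra.sub_shiftX12_mem_x12Ideal hn)
end
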